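/- arXiv:2603.24064 — 5 statements merged into one kernel-verified Lean document; each statement's English description precedes it below -/
import Mathlib

section
/- Utility-invariant threshold identity (Theorem, product form): fix an event ℓ, a support family A, and any function D : ℝ → ℝ. Suppose the portfolio (c, g) is supported on A, the cash stationarity equation λ = ∑_x Pr(x)·D(W(x)) holds, and for every active outcome i ∈ A ℓ the active stationarity equation p ℓ i · E₋ℓ[D(g ℓ i + R_ℓ)] = λ · π ℓ i holds. Then λ·(1 − Q_{ℓ,A}) = (1 − P_{ℓ,A}) · K_ℓ, where K_ℓ = E₋ℓ[D ∘ R_ℓ] is the continuation factor of event ℓ. -/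
open Finset

/-- Probability of a product state `x`. -/
def prodProb {m : ℕ} {n : Fin m → ℕ} (p : ∀ ℓ, Fin (n ℓ) → ℝ)
    (x : ∀ ℓ, Fin (n ℓ)) : ℝ :=
  ∏ ℓ, p ℓ (x ℓ)

/-- Terminal wealth of the portfolio `(c, g)` in product state `x`. -/
def wealth {m : ℕ} {n : Fin m → ℕ} (c : ℝ) (g : ∀ ℓ, Fin (n ℓ) → ℝ)
    (x : ∀ ℓ, Fin (n ℓ)) : ℝ :=
  c + ∑ ℓ, g ℓ (x ℓ)

/-- Probability of a reduced state `y` (a state of all events other than `ℓ`). -/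
def redProb {m : ℕ} {n : Fin m → ℕ} (p : ∀ ℓ, Fin (n ℓ) → ℝ) (ℓ : Fin m)
    (y : ∀ r : {r : Fin m // r ≠ ℓ}, Fin (n r.1)) : ℝ :=
  ∏ r, p r.1 (y r)

/-- Background wealth `R_ℓ(y)` from all events other than `ℓ`. -/
def background {m : ℕ} {n : Fin m → ℕ} (c : ℝ) (g : ∀ ℓ, Fin (n ℓ) → ℝ) (ℓ : Fin m)
    (y : ∀ r : {r : Fin m // r ≠ ℓ}, Fin (n r.1)) : ℝ :=
  c + ∑ r, g r.1 (y r)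

/-- Reduced expectation `E₋ℓ[h]` over reduced states of event `ℓ`. -/
def Eminus {m : ℕ} {n : Fin m → ℕ} (p : ∀ ℓ, Fin (n ℓ) → ℝ) (ℓ : Fin m)
    (h : (∀ r : {r : Fin m // r ≠ ℓ}, Fin (n r.1)) → ℝ) : ℝ :=
  ∑ y, redProb p ℓ y * h y

/-- Feasibility: nonnegative cash and wagers, unit budget, positive wealth in every state. -/
def Feasible {m : ℕ} {n : Fin m → ℕ} (π : ∀ ℓ, Fin (n ℓ) → ℝ)
    (c : ℝ) (g : ∀ ℓ, Fin (n ℓ) → ℝ) : Prop :=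
  0 ≤ c ∧ (∀ ℓ i, 0 ≤ g ℓ i) ∧ (c + ∑ ℓ, ∑ i, π ℓ i * g ℓ i = 1) ∧
    ∀ x, 0 < wealth c g x

/-- The wagers `g` are supported on the support family `A`. -/
def SupportedOn {m : ℕ} {n : Fin m → ℕ} (A : ∀ ℓ, Finset (Fin (n ℓ)))
    (g : ∀ ℓ, Fin (n ℓ) → ℝ) : Prop :=
  ∀ ℓ i, (i ∈ A ℓ → 0 < g ℓ i) ∧ (i ∉ A ℓ → g ℓ i = 0)

/-- `U` is an admissible utility with derivative `U'`. -/
def Admissible (U U' : ℝ → ℝ) : Prop :=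
  (∀ w : ℝ, 0 < w → HasDerivAt U (U' w) w) ∧ (∀ w : ℝ, 0 < w → 0 < U' w) ∧
    StrictAntiOn U' (Set.Ioi 0)

/-! Conditioning on the outcome of event `ℓ` splits the cash equation into
`λ = ∑ i, p ℓ i · E₋ℓ[D(g ℓ i + R_ℓ)]`. By active stationarity the active outcomes contribute
`λ · Q_{ℓ,A}`, while every inactive outcome has `g ℓ i = 0` and contributes `p ℓ i · K_ℓ`,
hence `(1 - P_{ℓ,A}) · K_ℓ` in total. -/

@[to_additive]
lemma prod_piSplitAt_symm {ι M : Type*} [Fintype ι] [DecidableEq ι] [CommMonoid M] (ℓ : ι)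
    {β : ι → Type*} (f : ∀ r, β r → M) (i : β ℓ) (y : ∀ r : {r // r ≠ ℓ}, β r.1) :
    ∏ r, f r ((Equiv.piSplitAt ℓ β).symm (i, y) r)
      = f ℓ i * ∏ r : {r // r ≠ ℓ}, f r.1 (y r) := by
  rw [Fintype.prod_eq_mul_prod_compl ℓ, prod_subtype ({ℓ}ᶜ) (p := (· ≠ ℓ)) (by simp)]
  congr 1
  · simp
  · exact prod_congr rfl fun r _ => by simp [r.2]

lemma sum_prodProb_mul_eq_sum_mul_Eminus {m : ℕ} {n : Fin m → ℕ} (p : ∀ ℓ, Fin (n ℓ) → ℝ)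
    (c : ℝ) (g : ∀ ℓ, Fin (n ℓ) → ℝ) (ℓ : Fin m) (D : ℝ → ℝ) :
    ∑ x, prodProb p x * D (wealth c g x)
      = ∑ i, p ℓ i * Eminus p ℓ (fun y => D (g ℓ i + background c g ℓ y)) := by
  rw [← (Equiv.piSplitAt ℓ (fun r => Fin (n r))).symm.sum_comp, Fintype.sum_prod_type]
  refine sum_congr rfl fun i _ => ?_
  rw [Eminus, mul_sum]
  refine sum_congr rfl fun y _ => ?_
  rw [prodProb, wealth, background, prod_piSplitAt_symm ℓ p, sum_piSplitAt_symm ℓ g, redProb,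
    mul_assoc, add_left_comm c]

theorem threshold_identity_product_general {m : ℕ} (n : Fin m → ℕ)
    (p π : ∀ ℓ, Fin (n ℓ) → ℝ)
    (hpsum : ∀ ℓ, ∑ i, p ℓ i = 1)
    (A : ∀ r, Finset (Fin (n r))) (ℓ : Fin m) (D : ℝ → ℝ)
    (c : ℝ) (g : ∀ ℓ, Fin (n ℓ) → ℝ) (lam : ℝ)
    (hsupp : SupportedOn A g)
    (hcash : lam = ∑ x, prodProb p x * D (wealth c g x))
    (hactive : ∀ i ∈ A ℓ,
      p ℓ i * Eminus p ℓ (fun y => D (g ℓ i + background c g ℓ y)) = lam * π ℓ i) :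
    lam * (1 - ∑ i ∈ A ℓ, π ℓ i)
      = (1 - ∑ i ∈ A ℓ, p ℓ i) * Eminus p ℓ (fun y => D (background c g ℓ y)) := by
  have hsplit := sum_prodProb_mul_eq_sum_mul_Eminus p c g ℓ D
  rw [← hcash, ← sum_add_sum_compl (A ℓ)] at hsplit
  have hA : ∑ i ∈ A ℓ, p ℓ i * Eminus p ℓ (fun y => D (g ℓ i + background c g ℓ y))
      = lam * ∑ i ∈ A ℓ, π ℓ i := by
    rw [mul_sum]
    exact sum_congr rfl hactive
  have hAc : ∑ i ∈ (A ℓ)ᶜ, p ℓ i * Eminus p ℓ (fun y => D (g ℓ i + background c g ℓ y))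
      = (1 - ∑ i ∈ A ℓ, p ℓ i) * Eminus p ℓ (fun y => D (background c g ℓ y)) := by
    rw [← hpsum ℓ, ← sum_add_sum_compl (A ℓ) (p ℓ), add_sub_cancel_left, sum_mul]
    refine sum_congr rfl fun i hi => ?_
    simp only [(hsupp ℓ i).2 (mem_compl.mp hi), zero_add]
  linarith

/-- utility-invariant threshold identity, product form:
`λ (1 - Q_{ℓ,A}) = (1 - P_{ℓ,A}) K_ℓ`. -/
theorem threshold_identity_product {m : ℕ} (n : Fin m → ℕ)
    (p π : ∀ ℓ, Fin (n ℓ) → ℝ) (hm : 1 ≤ m)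
    (hp : ∀ ℓ i, 0 < p ℓ i) (hpsum : ∀ ℓ, ∑ i, p ℓ i = 1)
    (hπ : ∀ ℓ i, 0 < π ℓ i)
    (A : ∀ r, Finset (Fin (n r))) (ℓ : Fin m) (D : ℝ → ℝ)
    (c : ℝ) (g : ∀ ℓ, Fin (n ℓ) → ℝ) (lam : ℝ)
    (hsupp : SupportedOn A g)
    (hcash : lam = ∑ x, prodProb p x * D (wealth c g x))
    (hactive : ∀ i ∈ A ℓ,
      p ℓ i * Eminus p ℓ (fun y => D (g ℓ i + background c g ℓ y)) = lam * π ℓ i) :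
    lam * (1 - ∑ i ∈ A ℓ, π ℓ i)
      = (1 - ∑ i ∈ A ℓ, p ℓ i) * Eminus p ℓ (fun y => D (background c g ℓ y)) :=
  threshold_identity_product_general n p π hpsum A ℓ D c g lam hsupp hcash hactive
end

section
/- Boundary-case identity with cash slack: fix an event ℓ, a support family A, a function D : ℝ → ℝ, and a real λ, and define the slack ν := λ − ∑_x Pr(x)·D(W(x)). If the portfolio (c, g) is supported on A and the active stationarity equations p ℓ i · E₋ℓ[D(g ℓ i + R_ℓ)] = λ · π ℓ i hold for every i ∈ A ℓ, then λ·(1 − Q_{ℓ,A}) = (1 − P_{ℓ,A})·K_ℓ + ν, where K_ℓ = E₋ℓ[D ∘ R_ℓ]. -/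
open Finset

lemma split_prodProb {m : ℕ} {n : Fin m → ℕ} (p : ∀ ℓ, Fin (n ℓ) → ℝ) (ℓ : Fin m)
    (x : ∀ r, Fin (n r)) :
    prodProb p x = p ℓ (x ℓ) * redProb p ℓ (fun r => x r.1) := by
  unfold prodProb redProb
  rw [← Finset.mul_prod_erase _ _ (Finset.mem_univ ℓ)]
  congr 1
  rw [← Finset.prod_subtype (Finset.univ.erase ℓ) (fun r => by simp) (fun r => p r (x r))]

lemma split_wealth {m : ℕ} {n : Fin m → ℕ} (c : ℝ) (g : ∀ ℓ, Fin (n ℓ) → ℝ) (ℓ : Fin m)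
    (x : ∀ r, Fin (n r)) :
    wealth c g x = g ℓ (x ℓ) + background c g ℓ (fun r => x r.1) := by
  unfold wealth background
  rw [← Finset.add_sum_erase _ _ (Finset.mem_univ ℓ),
    ← Finset.sum_subtype (Finset.univ.erase ℓ) (fun r => by simp) (fun r => g r (x r))]
  ring

lemma sum_split {m : ℕ} {n : Fin m → ℕ} (p : ∀ ℓ, Fin (n ℓ) → ℝ) (ℓ : Fin m)
    (c : ℝ) (g : ∀ ℓ, Fin (n ℓ) → ℝ) (D : ℝ → ℝ) :
    ∑ x, prodProb p x * D (wealth c g x)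
      = ∑ i, p ℓ i * Eminus p ℓ (fun y => D (g ℓ i + background c g ℓ y)) := by
  rw [← (Equiv.piSplitAt ℓ (fun r => Fin (n r))).symm.sum_comp
    (fun x => prodProb p x * D (wealth c g x)), Fintype.sum_prod_type]
  refine Finset.sum_congr rfl fun i _ => ?_
  rw [Eminus, Finset.mul_sum]
  refine Finset.sum_congr rfl fun y _ => ?_
  have hx : (Equiv.piSplitAt ℓ (fun r => Fin (n r))).symm (i, y) ℓ = i := by simp
  have hy : (fun r : {r : Fin m // r ≠ ℓ} =>
      (Equiv.piSplitAt ℓ (fun r => Fin (n r))).symm (i, y) r.1) = y := by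
    funext r
    simp [Equiv.piSplitAt, r.2]
  rw [split_prodProb p ℓ, split_wealth c g ℓ, hx, hy]
  ring

/-- boundary-case identity with cash slack
`λ (1 - Q_{ℓ,A}) = (1 - P_{ℓ,A}) K_ℓ + ν` where `ν = λ - E[D(W)]`. -/
theorem threshold_identity_with_slack {m : ℕ} (n : Fin m → ℕ)
    (p π : ∀ ℓ, Fin (n ℓ) → ℝ) (hm : 1 ≤ m)
    (hp : ∀ ℓ i, 0 < p ℓ i) (hpsum : ∀ ℓ, ∑ i, p ℓ i = 1)
    (hπ : ∀ ℓ i, 0 < π ℓ i)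
    (A : ∀ r, Finset (Fin (n r))) (ℓ : Fin m) (D : ℝ → ℝ)
    (c : ℝ) (g : ∀ ℓ, Fin (n ℓ) → ℝ) (lam : ℝ)
    (hsupp : SupportedOn A g)
    (hactive : ∀ i ∈ A ℓ,
      p ℓ i * Eminus p ℓ (fun y => D (g ℓ i + background c g ℓ y)) = lam * π ℓ i) :
    lam * (1 - ∑ i ∈ A ℓ, π ℓ i)
      = (1 - ∑ i ∈ A ℓ, p ℓ i) * Eminus p ℓ (fun y => D (background c g ℓ y))
        + (lam - ∑ x, prodProb p x * D (wealth c g x)) := by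
  
  have hsplit := sum_split p ℓ c g D
  have hcompl : ∀ i ∈ Finset.univ \ A ℓ,
      p ℓ i * Eminus p ℓ (fun y => D (g ℓ i + background c g ℓ y))
        = p ℓ i * Eminus p ℓ (fun y => D (background c g ℓ y)) := by
    intro i hi
    rw [(hsupp ℓ i).2 (by simpa using hi)]
    simp
  have hEW : ∑ x, prodProb p x * D (wealth c g x)
      = lam * (∑ i ∈ A ℓ, π ℓ i)
        + (1 - ∑ i ∈ A ℓ, p ℓ i) * Eminus p ℓ (fun y => D (background c g ℓ y)) := by
    rw [hsplit, ← Finset.sum_sdiff (Finset.subset_univ (A ℓ)),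
      Finset.sum_congr rfl hcompl, Finset.sum_congr rfl hactive,
      ← Finset.sum_mul, ← Finset.mul_sum]
    have : ∑ i ∈ Finset.univ \ A ℓ, p ℓ i = 1 - ∑ i ∈ A ℓ, p ℓ i := by
      rw [← hpsum ℓ, ← Finset.sum_sdiff (Finset.subset_univ (A ℓ))]; ring
    rw [this]; ring
  rw [hEW]; ring
end

section
/- Eventwise prefix property of optimal supports (Corollary): let U be admissible with derivative U', and let (c, g) be a feasible portfolio with c > 0 that maximizes Φ(c', g') = ∑_x Pr'(x)·U(W'(x)) over all feasible portfolios. Then for every event ℓ and outcomes i, j of event ℓ, if g ℓ i > 0 and g ℓ j = 0 then p ℓ i / π ℓ i > p ℓ j / π ℓ j; consequently, when the outcomes of each event are sorted by decreasing edge ratio p ℓ i / π ℓ i, the active set {i : g ℓ i > 0} of each event is a prefix. -/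
/-!
At an optimum, shifting budget from an active outcome `i` to an inactive outcome `j` of the same
event (wager `π_i` more on `j`, `π_j` less on `i`) is a feasible, budget-neutral direction, so the
one-sided derivative of expected utility along it is `≤ 0`. Conditioning on the other events, this
derivative is `π_i p_j M_j - π_j p_i M_i`, where `M_k` is the expected marginal utility
`U'(R_ℓ + g_k)` over the other events. Since `g_i > 0 = g_j` and `U'` is strictly decreasing,
`M_i < M_j`, which forces `p_j / π_j < p_i / π_i`. For outcomes sorted by edge ratio, an inactive
outcome before an active one would contradict this.
-/

open Finset

open Filter Topology

theorem HasDerivAt.nonpos_of_isLocalMaxOn_Ici {f : ℝ → ℝ} {f' a : ℝ} (hf : HasDerivAt f f' a)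
    (hmax : IsLocalMaxOn f (Set.Ici a) a) : f' ≤ 0 := by
  have h1 : (1 : ℝ) ∈ posTangentConeAt (Set.Ici a) a :=
    mem_posTangentConeAt_of_segment_subset (by simp [segment_eq_Icc, Set.Icc_subset_Ici_self])
  simpa using hmax.hasFDerivWithinAt_nonpos hf.hasDerivWithinAt.hasFDerivWithinAt h1

theorem hasDerivAt_sum_mul_comp_add_mul {ι : Type*} [Fintype ι] {U U' : ℝ → ℝ}
    (hU : ∀ w : ℝ, 0 < w → HasDerivAt U (U' w) w) (w a b : ι → ℝ) (ha : ∀ x, 0 < a x) :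
    HasDerivAt (fun t => ∑ x, w x * U (a x + t * b x)) (∑ x, w x * (U' (a x) * b x)) 0 := by
  refine HasDerivAt.fun_sum fun x _ => HasDerivAt.const_mul (w x) ?_
  have hline : HasDerivAt (fun t : ℝ => a x + t * b x) (b x) 0 := by
    simpa using ((hasDerivAt_id (0 : ℝ)).mul_const (b x)).const_add (a x)
  exact HasDerivAt.comp (0 : ℝ) (by simpa using hU (a x) (ha x)) hline

theorem sum_apply_pi_single {ι M : Type*} [Fintype ι] [DecidableEq ι] [AddCommMonoid M]
    {β : ι → Type*} [∀ i, Zero (β i)] (F : ∀ i, β i → M) (hF : ∀ i, F i 0 = 0) (i : ι) (b : β i) :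
    ∑ j, F j (Pi.single i b j) = F i b := by
  rw [sum_eq_single i (fun j _ hj => by rw [Pi.single_eq_of_ne hj, hF]) (by simp)]
  simp

section

variable {m : ℕ} {n : Fin m → ℕ}

theorem wealth_add_smul (c t : ℝ) (g h : ∀ ℓ, Fin (n ℓ) → ℝ) (x : ∀ ℓ, Fin (n ℓ)) :
    wealth c (g + t • h) x = wealth c g x + t * ∑ ℓ, h ℓ (x ℓ) := by
  simp only [wealth, Pi.add_apply, Pi.smul_apply, smul_eq_mul, sum_add_distrib, mul_sum]
  ring

theorem prodProb_piSplitAt_symm (p : ∀ ℓ, Fin (n ℓ) → ℝ) (ℓ : Fin m) (k : Fin (n ℓ))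
    (y : ∀ r : {r : Fin m // r ≠ ℓ}, Fin (n r.1)) :
    prodProb p ((Equiv.piSplitAt ℓ (fun r => Fin (n r))).symm (k, y)) = p ℓ k * redProb p ℓ y := by
  rw [prodProb, Fintype.prod_eq_mul_prod_subtype_ne _ ℓ]
  exact congr_arg₂ _ (by simp) (prod_congr rfl fun r _ => by simp [r.2])

theorem wealth_piSplitAt_symm (c : ℝ) (g : ∀ ℓ, Fin (n ℓ) → ℝ) (ℓ : Fin m) (k : Fin (n ℓ))
    (y : ∀ r : {r : Fin m // r ≠ ℓ}, Fin (n r.1)) :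
    wealth c g ((Equiv.piSplitAt ℓ (fun r => Fin (n r))).symm (k, y)) =
      background c g ℓ y + g ℓ k := by
  rw [wealth, background, Fintype.sum_eq_add_sum_subtype_ne _ ℓ,
    sum_congr rfl (g := fun r => g r.1 (y r)) fun r _ => by simp [r.2]]
  simp only [Equiv.piSplitAt_symm_apply, dite_true]
  ring

theorem sum_prodProb_mul_eq_sum_Eminus (p : ∀ ℓ, Fin (n ℓ) → ℝ) (ℓ : Fin m)
    (F : (∀ r, Fin (n r)) → ℝ) :
    ∑ x, prodProb p x * F x =
      ∑ k, p ℓ k *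
        Eminus p ℓ (fun y => F ((Equiv.piSplitAt ℓ (fun r => Fin (n r))).symm (k, y))) := by
  rw [← (Equiv.piSplitAt ℓ (fun r => Fin (n r))).symm.sum_comp, Fintype.sum_prod_type]
  simp only [prodProb_piSplitAt_symm, Eminus, mul_sum, mul_assoc]

theorem Eminus_lt_Eminus [∀ r, Nonempty (Fin (n r))] {p : ∀ ℓ, Fin (n ℓ) → ℝ}
    (hp : ∀ ℓ i, 0 < p ℓ i) (ℓ : Fin m) {f h : (∀ r : {r : Fin m // r ≠ ℓ}, Fin (n r.1)) → ℝ}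
    (hfh : ∀ y, f y < h y) : Eminus p ℓ f < Eminus p ℓ h :=
  sum_lt_sum_of_nonempty univ_nonempty fun y _ =>
    mul_lt_mul_of_pos_left (hfh y) (prod_pos fun r _ => hp r.1 _)

def expectedUtility (p : ∀ ℓ, Fin (n ℓ) → ℝ) (U : ℝ → ℝ) (c : ℝ) (g : ∀ ℓ, Fin (n ℓ) → ℝ) : ℝ :=
  ∑ x, prodProb p x * U (wealth c g x)

def IsOptimal (p π : ∀ ℓ, Fin (n ℓ) → ℝ) (U : ℝ → ℝ) (c : ℝ) (g : ∀ ℓ, Fin (n ℓ) → ℝ) : Prop :=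
  ∀ c' g', Feasible π c' g' → expectedUtility p U c' g' ≤ expectedUtility p U c g

-- `∂Φ/∂g ℓ i = p ℓ i * marginalUtility p U' c g ℓ i`
def marginalUtility (p : ∀ ℓ, Fin (n ℓ) → ℝ) (U' : ℝ → ℝ) (c : ℝ) (g : ∀ ℓ, Fin (n ℓ) → ℝ)
    (ℓ : Fin m) (i : Fin (n ℓ)) : ℝ :=
  Eminus p ℓ fun y => U' (background c g ℓ y + g ℓ i)

theorem eventually_feasible_add_smul {π : ∀ ℓ, Fin (n ℓ) → ℝ} {c : ℝ} {g h : ∀ ℓ, Fin (n ℓ) → ℝ}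
    (hfeas : Feasible π c g) (hbud : ∑ ℓ, ∑ i, π ℓ i * h ℓ i = 0)
    (hpos : ∀ ℓ i, g ℓ i = 0 → 0 ≤ h ℓ i) :
    ∀ᶠ t in 𝓝[≥] (0 : ℝ), Feasible π c (g + t • h) := by
  obtain ⟨hc, hg, hbudget, hW⟩ := hfeas
  have hline : ∀ a b : ℝ, 0 < a → ∀ᶠ t in 𝓝 (0 : ℝ), 0 < a + t * b := fun a b ha =>
    continuousAt_const.eventually_lt (f := fun _ => (0 : ℝ)) (g := fun t => a + t * b)
      (by fun_prop) (by simpa using ha)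
  have hwager : ∀ ℓ i, ∀ᶠ t in 𝓝[≥] (0 : ℝ), 0 ≤ g ℓ i + t * h ℓ i := by
    intro ℓ i
    rcases (hg ℓ i).eq_or_lt with h0 | h0
    · filter_upwards [self_mem_nhdsWithin] with t ht
      rw [← h0, zero_add]
      exact mul_nonneg ht (hpos ℓ i h0.symm)
    · exact ((hline _ _ h0).filter_mono nhdsWithin_le_nhds).mono fun t ht => ht.le
  have hwealth : ∀ x, ∀ᶠ t in 𝓝 (0 : ℝ), 0 < wealth c (g + t • h) x := fun x => by
    simpa only [wealth_add_smul] using hline _ (∑ ℓ, h ℓ (x ℓ)) (hW x)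
  filter_upwards [eventually_all.2 fun ℓ => eventually_all.2 (hwager ℓ),
    (eventually_all.2 hwealth).filter_mono nhdsWithin_le_nhds] with t hgt hWt
  refine ⟨hc, hgt, ?_, hWt⟩
  have hshift : ∑ ℓ, ∑ i, π ℓ i * (t * h ℓ i) = t * ∑ ℓ, ∑ i, π ℓ i * h ℓ i := by
    simp only [mul_sum]
    exact sum_congr rfl fun _ _ => sum_congr rfl fun _ _ => by ring
  simp only [Pi.add_apply, Pi.smul_apply, smul_eq_mul, mul_add, sum_add_distrib, hshift, hbud]
  linarith

variable {p π : ∀ ℓ, Fin (n ℓ) → ℝ} {U U' : ℝ → ℝ} {c : ℝ} {g : ∀ ℓ, Fin (n ℓ) → ℝ}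

theorem background_add_pos (hW : ∀ x, 0 < wealth c g x) (ℓ : Fin m) (i : Fin (n ℓ))
    (y : ∀ r : {r : Fin m // r ≠ ℓ}, Fin (n r.1)) : 0 < background c g ℓ y + g ℓ i :=
  wealth_piSplitAt_symm c g ℓ i y ▸ hW _

theorem marginalUtility_pos [∀ r, Nonempty (Fin (n r))] (hp : ∀ ℓ i, 0 < p ℓ i)
    (hU' : ∀ w, 0 < w → 0 < U' w) (hW : ∀ x, 0 < wealth c g x) (ℓ : Fin m) (i : Fin (n ℓ)) :
    0 < marginalUtility p U' c g ℓ i := by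
  simpa [marginalUtility, Eminus] using
    Eminus_lt_Eminus hp ℓ (f := 0) fun y => hU' _ (background_add_pos hW ℓ i y)

theorem marginalUtility_lt_marginalUtility [∀ r, Nonempty (Fin (n r))] (hp : ∀ ℓ i, 0 < p ℓ i)
    (hU' : StrictAntiOn U' (Set.Ioi 0)) (hW : ∀ x, 0 < wealth c g x) {ℓ : Fin m}
    {i j : Fin (n ℓ)} (hij : g ℓ j < g ℓ i) :
    marginalUtility p U' c g ℓ i < marginalUtility p U' c g ℓ j :=
  Eminus_lt_Eminus hp ℓ fun y =>
    hU' (background_add_pos hW ℓ j y) (background_add_pos hW ℓ i y) (by linarith)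

theorem IsOptimal.sum_prodProb_mul_deriv_nonpos (hopt : IsOptimal p π U c g)
    (hU : ∀ w, 0 < w → HasDerivAt U (U' w) w) (hfeas : Feasible π c g)
    {h : ∀ ℓ, Fin (n ℓ) → ℝ} (hbud : ∑ ℓ, ∑ i, π ℓ i * h ℓ i = 0)
    (hpos : ∀ ℓ i, g ℓ i = 0 → 0 ≤ h ℓ i) :
    ∑ x, prodProb p x * (U' (wealth c g x) * ∑ ℓ, h ℓ (x ℓ)) ≤ 0 := by
  refine (hasDerivAt_sum_mul_comp_add_mul hU _ _ _ hfeas.2.2.2).nonpos_of_isLocalMaxOn_Ici ?_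
  filter_upwards [eventually_feasible_add_smul hfeas hbud hpos] with t ht
  simpa [expectedUtility, wealth_add_smul] using hopt c (g + t • h) ht

theorem IsOptimal.sum_mul_marginalUtility_nonpos (hopt : IsOptimal p π U c g)
    (hU : ∀ w, 0 < w → HasDerivAt U (U' w) w) (hfeas : Feasible π c g) (ℓ : Fin m)
    {v : Fin (n ℓ) → ℝ} (hbud : ∑ i, π ℓ i * v i = 0) (hpos : ∀ i, g ℓ i = 0 → 0 ≤ v i) :
    ∑ i, p ℓ i * v i * marginalUtility p U' c g ℓ i ≤ 0 := by
  set h : ∀ r, Fin (n r) → ℝ := Pi.single ℓ v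
  have hbud' : ∑ r, ∑ i, π r i * h r i = 0 := by
    rwa [sum_apply_pi_single (fun r (w : Fin (n r) → ℝ) => ∑ i, π r i * w i) (by simp)]
  have hpos' : ∀ r i, g r i = 0 → 0 ≤ h r i := by
    intro r i
    rcases eq_or_ne r ℓ with rfl | hr
    · simpa [h] using hpos i
    · simp [h, Pi.single_eq_of_ne hr]
  have hdir : ∀ x : ∀ r, Fin (n r), ∑ r, h r (x r) = v (x ℓ) := fun x =>
    sum_apply_pi_single (fun r (w : Fin (n r) → ℝ) => w (x r)) (fun _ => rfl) ℓ v
  have hderiv := hopt.sum_prodProb_mul_deriv_nonpos hU hfeas hbud' hpos'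
  simp only [hdir] at hderiv
  rw [sum_prodProb_mul_eq_sum_Eminus p ℓ] at hderiv
  simpa [wealth_piSplitAt_symm, marginalUtility, Eminus, mul_sum, mul_comm, mul_left_comm,
    mul_assoc] using hderiv

theorem IsOptimal.div_lt_div_of_pos_of_eq_zero [∀ r, Nonempty (Fin (n r))]
    (hopt : IsOptimal p π U c g) (hU : Admissible U U') (hfeas : Feasible π c g)
    (hp : ∀ ℓ i, 0 < p ℓ i) (hπ : ∀ ℓ i, 0 < π ℓ i) {ℓ : Fin m} {i j : Fin (n ℓ)}
    (hi : 0 < g ℓ i) (hj : g ℓ j = 0) : p ℓ j / π ℓ j < p ℓ i / π ℓ i := by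
  have hfoc : p ℓ j * π ℓ i * marginalUtility p U' c g ℓ j ≤
      p ℓ i * π ℓ j * marginalUtility p U' c g ℓ i := by
    have h := hopt.sum_mul_marginalUtility_nonpos hU.1 hfeas ℓ
      (v := Pi.single j (π ℓ i) - Pi.single i (π ℓ j))
      (by
        simp only [Pi.sub_apply, Pi.single_apply, mul_sub, mul_ite, mul_zero, sum_sub_distrib,
          sum_ite_eq', mem_univ, if_true]
        ring) fun k hk => by
        have hki : k ≠ i := by rintro rfl; exact hi.ne' hk
        simp only [Pi.sub_apply, Pi.single_apply, hki, if_false, sub_zero]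
        exact ite_nonneg (hπ ℓ i).le le_rfl
    simp only [Pi.sub_apply, Pi.single_apply, mul_sub, mul_ite, mul_zero, sub_mul, ite_mul,
      zero_mul, sum_sub_distrib, sum_ite_eq', mem_univ, if_true] at h
    linarith
  have hM := marginalUtility_lt_marginalUtility (U' := U') hp hU.2.2 hfeas.2.2.2 (hj ▸ hi)
  have hMpos := marginalUtility_pos hp hU.2.1 hfeas.2.2.2 ℓ j
  rw [div_lt_div_iff₀ (hπ ℓ j) (hπ ℓ i)]
  nlinarith [mul_pos (hp ℓ i) (hπ ℓ j)]

end

theorem active_prefix_property_general {m : ℕ} (n : Fin m → ℕ)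
    (p π : ∀ ℓ, Fin (n ℓ) → ℝ)
    (hp : ∀ ℓ i, 0 < p ℓ i) (hpsum : ∀ ℓ, ∑ i, p ℓ i = 1)
    (hπ : ∀ ℓ i, 0 < π ℓ i)
    (U U' : ℝ → ℝ) (hU : Admissible U U')
    (c : ℝ) (g : ∀ ℓ, Fin (n ℓ) → ℝ)
    (hfeas : Feasible π c g)
    (hopt : ∀ c' : ℝ, ∀ g' : ∀ ℓ, Fin (n ℓ) → ℝ, Feasible π c' g' →
      ∑ x, prodProb p x * U (wealth c' g' x) ≤ ∑ x, prodProb p x * U (wealth c g x)) :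
    (∀ ℓ : Fin m, ∀ i j : Fin (n ℓ), 0 < g ℓ i → g ℓ j = 0 →
      p ℓ j / π ℓ j < p ℓ i / π ℓ i)
    ∧ (∀ ℓ : Fin m,
        (∀ i j : Fin (n ℓ), i ≤ j → p ℓ j / π ℓ j ≤ p ℓ i / π ℓ i) →
        ∀ i j : Fin (n ℓ), i ≤ j → 0 < g ℓ j → 0 < g ℓ i) := by
  have : ∀ r, Nonempty (Fin (n r)) := fun r =>
    univ_nonempty_iff.1 (nonempty_of_sum_ne_zero (by rw [hpsum r]; exact one_ne_zero))
  have hratio : ∀ ℓ : Fin m, ∀ i j : Fin (n ℓ), 0 < g ℓ i → g ℓ j = 0 →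
      p ℓ j / π ℓ j < p ℓ i / π ℓ i := fun ℓ i j hi hj =>
    IsOptimal.div_lt_div_of_pos_of_eq_zero hopt hU hfeas hp hπ hi hj
  refine ⟨hratio, fun ℓ hsorted i j hij hj => ?_⟩
  by_contra hi
  have hi0 : g ℓ i = 0 := le_antisymm (not_lt.1 hi) (hfeas.2.1 ℓ i)
  exact (hsorted i j hij).not_gt (hratio ℓ j i hj hi0)

/-- eventwise prefix property of optimal supports: at a maximizer with
positive cash, an active outcome has a strictly larger edge ratio than any inactive
outcome of the same event; hence, sorted by decreasing edge ratio, the active set of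
each event is a prefix. -/
theorem active_prefix_property {m : ℕ} (n : Fin m → ℕ)
    (p π : ∀ ℓ, Fin (n ℓ) → ℝ) (hm : 1 ≤ m)
    (hp : ∀ ℓ i, 0 < p ℓ i) (hpsum : ∀ ℓ, ∑ i, p ℓ i = 1)
    (hπ : ∀ ℓ i, 0 < π ℓ i)
    (U U' : ℝ → ℝ) (hU : Admissible U U')
    (c : ℝ) (g : ∀ ℓ, Fin (n ℓ) → ℝ)
    (hfeas : Feasible π c g) (hc : 0 < c)
    (hopt : ∀ c' : ℝ, ∀ g' : ∀ ℓ, Fin (n ℓ) → ℝ, Feasible π c' g' →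
      ∑ x, prodProb p x * U (wealth c' g' x) ≤ ∑ x, prodProb p x * U (wealth c g x)) :
    (∀ ℓ : Fin m, ∀ i j : Fin (n ℓ), 0 < g ℓ i → g ℓ j = 0 →
      p ℓ j / π ℓ j < p ℓ i / π ℓ i)
    ∧ (∀ ℓ : Fin m,
        (∀ i j : Fin (n ℓ), i ≤ j → p ℓ j / π ℓ j ≤ p ℓ i / π ℓ i) →
        ∀ i j : Fin (n ℓ), i ≤ j → 0 < g ℓ j → 0 < g ℓ i) :=
  active_prefix_property_general n p π hp hpsum hπ U U' hU c g hfeas hopt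
end

section
/- One-dimensional reduction of the single-event problem (scalar budget equation): in the single-event problem, let U' : ℝ → ℝ and let V : ℝ → ℝ satisfy V (U' w) = w for every w > 0. Suppose c > 0, g i > 0 for i ∈ A and g i = 0 for i ∉ A, the budget c + ∑_i π i · g i = 1 holds, the active first-order conditions U'(c + g i) = λ · π i / p i hold for every i ∈ A with λ > 0, the threshold identity λ · (1 − Q_A) = (1 − P_A) · U'(c) holds, and P_A < 1, Q_A < 1. Then (1 − Q_A) · V(λ · (1 − Q_A)/(1 − P_A)) + ∑_{i ∈ A} π i · V(λ · π i / p i) = 1. -/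
open Finset

/-- Single-event feasibility: nonnegative cash and wagers, unit budget, positive
wealth on every outcome. -/
def FeasibleSingle {n : ℕ} (π : Fin n → ℝ) (c : ℝ) (g : Fin n → ℝ) : Prop :=
  0 ≤ c ∧ (∀ i, 0 ≤ g i) ∧ (c + ∑ i, π i * g i = 1) ∧ ∀ i, 0 < c + g i

/-- one-dimensional reduction of the single-event problem: given the
active first-order conditions and the threshold identity, the budget constraint
becomes a single scalar equation in `λ` involving the inverse marginal utility `V`. -/
theorem scalar_budget_equation {n : ℕ} (p π : Fin n → ℝ)
    (hp : ∀ i, 0 < p i) (hpsum : ∑ i, p i = 1) (hπ : ∀ i, 0 < π i)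
    (U' V : ℝ → ℝ) (hV : ∀ w : ℝ, 0 < w → V (U' w) = w)
    (A : Finset (Fin n)) (c : ℝ) (g : Fin n → ℝ) (lam : ℝ)
    (hc : 0 < c) (hgA : ∀ i ∈ A, 0 < g i) (hgA' : ∀ i ∉ A, g i = 0)
    (hbudget : c + ∑ i, π i * g i = 1)
    (hlam : 0 < lam)
    (hfoc : ∀ i ∈ A, U' (c + g i) = lam * π i / p i)
    (hthr : lam * (1 - ∑ i ∈ A, π i) = (1 - ∑ i ∈ A, p i) * U' c)
    (hP : ∑ i ∈ A, p i < 1) (hQ : ∑ i ∈ A, π i < 1) :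
    (1 - ∑ i ∈ A, π i) * V (lam * (1 - ∑ i ∈ A, π i) / (1 - ∑ i ∈ A, p i))
      + ∑ i ∈ A, π i * V (lam * π i / p i) = 1 := by
  have hP' : (0:ℝ) < 1 - ∑ i ∈ A, p i := by linarith
  have h1 : lam * (1 - ∑ i ∈ A, π i) / (1 - ∑ i ∈ A, p i) = U' c := by
    rw [hthr]; field_simp
  have h2 : ∀ i ∈ A, V (lam * π i / p i) = c + g i := by
    intro i hi
    rw [← hfoc i hi]
    exact hV _ (by have := hgA i hi; linarith)
  have h3 : ∑ i ∈ A, π i * V (lam * π i / p i) = ∑ i ∈ A, π i * (c + g i) :=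
    sum_congr rfl fun i hi => by rw [h2 i hi]
  rw [h1, hV c hc, h3]
  have hsum : ∑ i, π i * g i = ∑ i ∈ A, π i * g i :=
    (sum_subset (subset_univ A) (fun i _ hi => by rw [hgA' i hi, mul_zero])).symm
  have : ∑ i ∈ A, π i * (c + g i) = (∑ i ∈ A, π i) * c + ∑ i ∈ A, π i * g i := by
    rw [sum_mul, ← sum_add_distrib]; exact sum_congr rfl fun i _ => by ring
  rw [this, ← hsum]; linarith
end

section
/- Uniqueness of the greedy prefix (no-ties case): in the single-event data, assume the edge ratios r i = p i / π i are strictly decreasing in i (i < j implies r i > r j). For k ∈ ℕ with k ≤ n, write P_k = ∑_{i < k} p i, Q_k = ∑_{i < k} π i, and θ_k = (1 − P_k)/(1 − Q_k). Then there is at most one k ≤ n satisfying all of: Q_k < 1; r i > θ_k for every i < k; and r k ≤ θ_k if k < n. That is, any two indices k, k' satisfying these three conditions are equal. -/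
open Finset

/-- The prefix probability mass `P_k = ∑_{i < k} p i` (also used for prices). -/
def prefixMass {n : ℕ} (p : Fin n → ℝ) (k : ℕ) : ℝ :=
  ∑ i ∈ Finset.univ.filter (fun i : Fin n => i.val < k), p i

/-- The prefix threshold `θ_k = (1 - P_k)/(1 - Q_k)`. -/
noncomputable def prefixThreshold {n : ℕ} (p π : Fin n → ℝ) (k : ℕ) : ℝ :=
  (1 - prefixMass p k) / (1 - prefixMass π k)


lemma greedy_aux {n : ℕ} (p π : Fin n → ℝ)
    (hp : ∀ i, 0 < p i) (hπ : ∀ i, 0 < π i)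
    (hsort : ∀ i j : Fin n, i < j → p j / π j < p i / π i)
    (k k' : ℕ) (hk' : k' ≤ n)
    (hQ : prefixMass π k < 1)
    (hstop : ∀ h : k < n, p ⟨k, h⟩ / π ⟨k, h⟩ ≤ prefixThreshold p π k)
    (hQ' : prefixMass π k' < 1)
    (hact' : ∀ i : Fin n, i.val < k' → prefixThreshold p π k' < p i / π i)
    (hlt : k < k') : False := by
  have hkn : k < n := lt_of_lt_of_le hlt hk'
  set K : Fin n := ⟨k, hkn⟩
  set θ := prefixThreshold p π k with hθ
  have hrk : p K / π K ≤ θ := hstop hkn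
  have hθ'lt : prefixThreshold p π k' < p K / π K := hact' K hlt
  -- split sums
  have hsplit : ∀ f : Fin n → ℝ, prefixMass f k' =
      prefixMass f k + ∑ i ∈ univ.filter (fun i : Fin n => k ≤ i.val ∧ i.val < k'), f i := by
    intro f
    unfold prefixMass
    rw [← Finset.sum_union]
    · congr 1
      ext i
      simp only [Finset.mem_union, Finset.mem_filter, Finset.mem_univ, true_and]
      omega
    · rw [Finset.disjoint_filter]
      intro i _ hi
      omega
  have hQk : 0 < 1 - prefixMass π k := by linarith
  have hQk' : 0 < 1 - prefixMass π k' := by linarith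
  -- termwise bound
  have hterm : ∀ i ∈ univ.filter (fun i : Fin n => k ≤ i.val ∧ i.val < k'), p i ≤ θ * π i := by
    intro i hi
    simp only [Finset.mem_filter, Finset.mem_univ, true_and] at hi
    have hri : p i / π i ≤ θ := by
      rcases eq_or_lt_of_le hi.1 with h | h
      · have : i = K := by ext; exact h.symm
        rw [this]; exact hrk
      · exact le_of_lt (lt_of_lt_of_le (hsort K i h) hrk)
    calc p i = (p i / π i) * π i := by rw [div_mul_cancel₀ _ (ne_of_gt (hπ i))]
    _ ≤ θ * π i := mul_le_mul_of_nonneg_right hri (hπ i).le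
  have hsum : ∑ i ∈ univ.filter (fun i : Fin n => k ≤ i.val ∧ i.val < k'), p i ≤
      θ * ∑ i ∈ univ.filter (fun i : Fin n => k ≤ i.val ∧ i.val < k'), π i := by
    rw [Finset.mul_sum]
    exact Finset.sum_le_sum hterm
  have hθeq : θ * (1 - prefixMass π k) = 1 - prefixMass p k := by
    rw [hθ, prefixThreshold, div_mul_cancel₀ _ (ne_of_gt hQk)]
  have hkey : θ * (1 - prefixMass π k') ≤ 1 - prefixMass p k' := by
    rw [hsplit p, hsplit π]
    nlinarith
  have hθ' : θ ≤ prefixThreshold p π k' := by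
    rw [prefixThreshold, le_div_iff₀ hQk']
    exact hkey
  linarith

/-- uniqueness of the greedy prefix when edge ratios are strictly
decreasing: at most one `k ≤ n` has `Q_k < 1`, all edge ratios above the threshold
`θ_k` before `k`, and the next edge ratio at most `θ_k`. -/
theorem greedy_prefix_unique {n : ℕ} (p π : Fin n → ℝ)
    (hp : ∀ i, 0 < p i) (hpsum : ∑ i, p i = 1) (hπ : ∀ i, 0 < π i)
    (hsort : ∀ i j : Fin n, i < j → p j / π j < p i / π i)
    (k k' : ℕ) (hk : k ≤ n) (hk' : k' ≤ n)
    (hQ : prefixMass π k < 1)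
    (hact : ∀ i : Fin n, i.val < k → prefixThreshold p π k < p i / π i)
    (hstop : ∀ h : k < n, p ⟨k, h⟩ / π ⟨k, h⟩ ≤ prefixThreshold p π k)
    (hQ' : prefixMass π k' < 1)
    (hact' : ∀ i : Fin n, i.val < k' → prefixThreshold p π k' < p i / π i)
    (hstop' : ∀ h : k' < n, p ⟨k', h⟩ / π ⟨k', h⟩ ≤ prefixThreshold p π k') :
    k = k' := by
  rcases lt_trichotomy k k' with h | h | h
  · exact absurd (greedy_aux p π hp hπ hsort k k' hk' hQ hstop hQ' hact' h) not_false
  · exact h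
  · exact absurd (greedy_aux p π hp hπ hsort k' k hk hQ' hstop' hQ hact h) not_false
end
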